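/- For natural numbers n ≥ k, the number of merging paths from (0,0) to (n,n) with exactly k zeros equals C(2n, k) - C(2n, k-1). -/
import Mathlib


/-- Process an arrival sequence with right-lane count `R` and left-lane count `L`:
`false` (a red car) or a shorter-or-equal right lane sends the car right. -/
def procAux : ℕ → ℕ → List Bool → ℕ × ℕ
  | R, L, [] => (R, L)
  | R, L, bi :: rest =>
    if bi = false ∨ R ≤ L then procAux (R + 1) L rest else procAux R (L + 1) rest

/-- Final (right lane length, left lane length) of an arrival sequence. -/
def proc (b : List Bool) : ℕ × ℕ := procAux 0 0 b

/-- The final length of the right lane. -/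
def rlen (b : List Bool) : ℕ := (proc b).1

/-- Number of bounces: steps where `bᵢ = 1` and the lanes are equal. -/
def bncAux : ℕ → ℕ → List Bool → ℕ
  | _, _, [] => 0
  | R, L, bi :: rest =>
    if bi = true ∧ R = L then 1 + bncAux (R + 1) L rest
    else if bi = false ∨ R ≤ L then bncAux (R + 1) L rest
    else bncAux R (L + 1) rest

def bnc (b : List Bool) : ℕ := bncAux 0 0 b

/-- The parity vector: starts at `0` and toggles just after each bounce. -/
def pvAux : ℕ → ℕ → Bool → List Bool → List Bool
  | _, _, _, [] => []
  | R, L, p, bi :: rest =>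
    let p' := if bi = true ∧ R = L then !p else p
    if bi = false ∨ R ≤ L then p :: pvAux (R + 1) L p' rest
    else p :: pvAux R (L + 1) p' rest

def parityVec (b : List Bool) : List Bool := pvAux 0 0 false b

/-- `φ(b) = b + p(b)` bitwise mod 2. -/
def phi (b : List Bool) : List Bool := List.zipWith xor b (parityVec b)

/-- Binomial coefficient with integer lower index, zero when negative. -/
def chooseZ (a : ℕ) (b : ℤ) : ℕ := if 0 ≤ b then a.choose b.toNat else 0

lemma procAux_sum (l : List Bool) : ∀ R L, (procAux R L l).1 + (procAux R L l).2 = R + L + l.length := by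
  induction l with
  | nil => intro R L; simp [procAux]
  | cons b rest ih =>
    intro R L
    by_cases h : b = false ∨ R ≤ L
    · rw [procAux, if_pos h, ih]; simp; omega
    · rw [procAux, if_neg h, ih]; simp; omega

lemma procAux_count (l : List Bool) : ∀ R L, R + l.count false ≤ (procAux R L l).1 := by
  induction l with
  | nil => intro R L; simp [procAux]
  | cons b rest ih =>
    intro R L
    by_cases h : b = false ∨ R ≤ L
    · rw [procAux, if_pos h]
      have := ih (R+1) L
      rcases Bool.eq_false_or_eq_true b with hb | hb <;> simp [hb] at * <;> omega
    · rw [procAux, if_neg h]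
      have := ih R (L+1)
      have hb : b = true := by
        cases b
        · exact absurd (Or.inl rfl) h
        · rfl
      simp [hb] at *; omega

lemma chooseZ_succ (m : ℕ) (j : ℤ) :
    chooseZ (m+1) j = chooseZ m (j-1) + chooseZ m j := by
  unfold chooseZ
  split_ifs with h1 h2 h2
  · have hj : j.toNat = (j-1).toNat + 1 := by omega
    rw [hj, Nat.choose_succ_succ]
  · have hj : j = 0 := by omega
    simp [hj]
  · omega
  · rfl

lemma chooseZ_natCast (m k : ℕ) : chooseZ m (k : ℤ) = m.choose k := by
  simp [chooseZ]

lemma filter_card_congr {α : Type*} [Fintype α] {p q : α → Prop}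
    [DecidablePred p] [DecidablePred q] (h : ∀ x, p x ↔ q x) :
    (Finset.univ.filter p).card = (Finset.univ.filter q).card := by
  congr 1; ext x; simp [h x]

lemma card_split (m : ℕ) (Q : List Bool → Prop) [DecidablePred Q] :
    (Finset.univ.filter (fun c : Fin (m+1) → Bool => Q (List.ofFn c))).card
    = (Finset.univ.filter (fun c : Fin m → Bool => Q (false :: List.ofFn c))).card
    + (Finset.univ.filter (fun c : Fin m → Bool => Q (true :: List.ofFn c))).card := by
  rw [Finset.card_filter, Finset.card_filter, Finset.card_filter]
  rw [← Equiv.sum_comp (Fin.consEquiv (fun _ : Fin (m+1) => Bool))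
      (fun c => if Q (List.ofFn c) then 1 else 0)]
  rw [Fintype.sum_prod_type]
  rw [Fintype.sum_bool]
  simp [Fin.consEquiv, List.ofFn_succ, Fin.cons_zero, Fin.cons_succ, Nat.add_comm]

def cnt (m R L k : ℕ) : ℕ :=
  (Finset.univ.filter (fun c : Fin m → Bool =>
    (List.ofFn c).count false = k ∧
      (procAux R L (List.ofFn c)).1 = (procAux R L (List.ofFn c)).2)).card

lemma cnt_eq_zero (m R L k : ℕ) (h : m + L + 1 ≤ 2*k + R) : cnt m R L k = 0 := by
  unfold cnt
  rw [Finset.card_eq_zero, Finset.filter_eq_empty_iff]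
  rintro c - ⟨hc, hb⟩
  have hs := procAux_sum (List.ofFn c) R L
  have hk := procAux_count (List.ofFn c) R L
  rw [List.length_ofFn] at hs
  rw [hc] at hk
  omega

lemma cnt_succ (m R L k : ℕ) :
    cnt (m+1) R L k
    = (Finset.univ.filter (fun c : Fin m → Bool =>
        (false :: List.ofFn c).count false = k ∧
          (procAux R L (false :: List.ofFn c)).1 = (procAux R L (false :: List.ofFn c)).2)).card
    + (Finset.univ.filter (fun c : Fin m → Bool =>
        (true :: List.ofFn c).count false = k ∧
          (procAux R L (true :: List.ofFn c)).1 = (procAux R L (true :: List.ofFn c)).2)).card :=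
  card_split m (fun l => l.count false = k ∧ (procAux R L l).1 = (procAux R L l).2)

lemma cnt_main : ∀ m R L k : ℕ, L ≤ R → (m + L) % 2 = R % 2 → 2*k + R ≤ m + L →
    (cnt m R L k : ℤ) = chooseZ m k - chooseZ m ((k:ℤ) - 1) := by
  intro m
  induction m with
  | zero =>
    intro R L k hLR hpar hle
    have hk : k = 0 := by omega
    have hRL : R = L := by omega
    subst hk hRL
    have h1 : cnt 0 R R 0 = 1 := by
      unfold cnt
      have he : (Finset.univ.filter (fun c : Fin 0 → Bool =>
          (List.ofFn c).count false = 0 ∧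
            (procAux R R (List.ofFn c)).1 = (procAux R R (List.ofFn c)).2)) = Finset.univ := by
        ext c
        simp [List.ofFn_zero, procAux]
      rw [he, Finset.card_univ]
      simp
    rw [h1]
    norm_num [chooseZ]
  | succ m ih =>
    intro R L k hLR hpar hle
    rw [cnt_succ]
    have hfalse : ∀ l : List Bool, procAux R L (false :: l) = procAux (R+1) L l := by
      intro l; rw [procAux]; simp
    by_cases hRL : R ≤ L
    · -- bounce case : R = L
      have hR : L = R := le_antisymm hLR hRL
      subst hR
      have htrue : ∀ l : List Bool, procAux L L (true :: l) = procAux (L+1) L l := by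
        intro l; rw [procAux]; simp
      have hB : (Finset.univ.filter (fun c : Fin m → Bool =>
          (true :: List.ofFn c).count false = k ∧
            (procAux L L (true :: List.ofFn c)).1 = (procAux L L (true :: List.ofFn c)).2)).card
          = cnt m (L+1) L k := by
        apply filter_card_congr
        intro c
        rw [htrue]
        simp [List.count_cons]
      rw [hB]
      rcases k with _ | j
      · -- k = 0
        have hA : (Finset.univ.filter (fun c : Fin m → Bool =>
            (false :: List.ofFn c).count false = 0 ∧
              (procAux L L (false :: List.ofFn c)).1 = (procAux L L (false :: List.ofFn c)).2)).card = 0 := by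
          rw [Finset.card_eq_zero, Finset.filter_eq_empty_iff]
          rintro c - ⟨hc, -⟩
          simp [List.count_cons] at hc
        rw [hA]
        have hm1 : 1 ≤ m := by omega
        have hIH := ih (L+1) L 0 (by omega) (by omega) (by omega)
        push_cast [hIH]
        norm_num [chooseZ]
      · -- k = j+1
        have hA : (Finset.univ.filter (fun c : Fin m → Bool =>
            (false :: List.ofFn c).count false = (j+1) ∧
              (procAux L L (false :: List.ofFn c)).1 = (procAux L L (false :: List.ofFn c)).2)).card
            = cnt m (L+1) L j := by
          apply filter_card_congr
          intro c
          rw [hfalse]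
          simp [List.count_cons]
        rw [hA]
        have hAval := ih (L+1) L j (by omega) (by omega) (by omega)
        have hp1 : (chooseZ (m+1) ((j:ℤ)+1) : ℤ) = chooseZ m (j:ℤ) + chooseZ m ((j:ℤ)+1) := by
          have h := chooseZ_succ m ((j:ℤ)+1)
          rw [show ((j:ℤ)+1)-1 = (j:ℤ) by ring] at h
          exact_mod_cast h
        have hp2 : (chooseZ (m+1) (j:ℤ) : ℤ) = chooseZ m ((j:ℤ)-1) + chooseZ m (j:ℤ) := by
          exact_mod_cast chooseZ_succ m (j:ℤ)
        have hgc : ((j+1:ℕ):ℤ) = (j:ℤ)+1 := by push_cast; ring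
        have hgc2 : ((j+1:ℕ):ℤ) - 1 = (j:ℤ) := by push_cast; ring
        simp only [hgc, hgc2, show (j:ℤ)+1-1 = (j:ℤ) from by ring]
        by_cases h2 : 2*j + 3 ≤ m
        · have hBval := ih (L+1) L (j+1) (by omega) (by omega) (by omega)
          simp only [hgc, hgc2, show (j:ℤ)+1-1 = (j:ℤ) from by ring] at hBval
          rw [Nat.cast_add, hAval, hBval]
          linarith [hp1, hp2]
        · -- m = 2j+1, boundary
          have hm : m = 2*j + 1 := by omega
          have hBval : cnt m (L+1) L (j+1) = 0 := cnt_eq_zero m (L+1) L (j+1) (by omega)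
          have hsym : chooseZ m ((j:ℤ)+1) = chooseZ m (j:ℤ) := by
            rw [show (j:ℤ)+1 = ((j+1:ℕ):ℤ) by push_cast; ring, chooseZ_natCast, chooseZ_natCast, hm]
            have h3 := Nat.choose_symm (show j+1 ≤ 2*j+1 by omega)
            rw [show 2*j+1-(j+1) = j by omega] at h3
            omega
          have hsymZ : (chooseZ m ((j:ℤ)+1) : ℤ) = chooseZ m (j:ℤ) := by exact_mod_cast hsym
          rw [hBval, Nat.add_zero, hAval]
          linarith [hp1, hp2, hsymZ]
    · -- R > L case
      have hLR' : L < R := lt_of_not_ge hRL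
      have htrue : ∀ l : List Bool, procAux R L (true :: l) = procAux R (L+1) l := by
        intro l; rw [procAux]; simp; omega
      have hB : (Finset.univ.filter (fun c : Fin m → Bool =>
          (true :: List.ofFn c).count false = k ∧
            (procAux R L (true :: List.ofFn c)).1 = (procAux R L (true :: List.ofFn c)).2)).card
          = cnt m R (L+1) k := by
        apply filter_card_congr
        intro c
        rw [htrue]
        simp [List.count_cons]
      rw [hB]
      rcases k with _ | j
      · have hA : (Finset.univ.filter (fun c : Fin m → Bool =>
            (false :: List.ofFn c).count false = 0 ∧
              (procAux R L (false :: List.ofFn c)).1 = (procAux R L (false :: List.ofFn c)).2)).card = 0 := by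
          rw [Finset.card_eq_zero, Finset.filter_eq_empty_iff]
          rintro c - ⟨hc, -⟩
          simp [List.count_cons] at hc
        rw [hA]
        have hIH := ih R (L+1) 0 (by omega) (by omega) (by omega)
        push_cast [hIH]
        norm_num [chooseZ]
      · have hA : (Finset.univ.filter (fun c : Fin m → Bool =>
            (false :: List.ofFn c).count false = (j+1) ∧
              (procAux R L (false :: List.ofFn c)).1 = (procAux R L (false :: List.ofFn c)).2)).card
            = cnt m (R+1) L j := by
          apply filter_card_congr
          intro c
          rw [hfalse]
          simp [List.count_cons]
        rw [hA]
        have hAval := ih (R+1) L j (by omega) (by omega) (by omega)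
        have hBval := ih R (L+1) (j+1) (by omega) (by omega) (by omega)
        have hgc0 : ((j+1:ℕ):ℤ) = (j:ℤ)+1 := by push_cast; ring
        have hgc02 : ((j+1:ℕ):ℤ) - 1 = (j:ℤ) := by push_cast; ring
        simp only [hgc0, hgc02, show (j:ℤ)+1-1 = (j:ℤ) from by ring] at hBval
        have hp1 : (chooseZ (m+1) ((j:ℤ)+1) : ℤ) = chooseZ m (j:ℤ) + chooseZ m ((j:ℤ)+1) := by
          have h := chooseZ_succ m ((j:ℤ)+1)
          rw [show ((j:ℤ)+1)-1 = (j:ℤ) by ring] at h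
          exact_mod_cast h
        have hp2 : (chooseZ (m+1) (j:ℤ) : ℤ) = chooseZ m ((j:ℤ)-1) + chooseZ m (j:ℤ) := by
          exact_mod_cast chooseZ_succ m (j:ℤ)
        have hgc : ((j+1:ℕ):ℤ) = (j:ℤ)+1 := by push_cast; ring
        have hgc2 : ((j+1:ℕ):ℤ) - 1 = (j:ℤ) := by push_cast; ring
        simp only [hgc, hgc2, show (j:ℤ)+1-1 = (j:ℤ) from by ring]
        rw [Nat.cast_add, hAval, hBval]
        linarith [hp1, hp2]

theorem stmt_11 (n k : ℕ) (hnk : k ≤ n) :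
    ((Finset.univ.filter (fun c : Fin (2 * n) → Bool =>
        (List.ofFn c).count false = k ∧ proc (List.ofFn c) = (n, n))).card : ℤ) =
      Nat.choose (2 * n) k - chooseZ (2 * n) ((k : ℤ) - 1) := by
  have hpred : ∀ c : Fin (2*n) → Bool,
      ((List.ofFn c).count false = k ∧ proc (List.ofFn c) = (n, n)) ↔
      ((List.ofFn c).count false = k ∧
        (procAux 0 0 (List.ofFn c)).1 = (procAux 0 0 (List.ofFn c)).2) := by
    intro c
    constructor
    · rintro ⟨h1, h2⟩
      refine ⟨h1, ?_⟩
      have : procAux 0 0 (List.ofFn c) = (n, n) := h2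
      rw [this]
    · rintro ⟨h1, h2⟩
      refine ⟨h1, ?_⟩
      have hs := procAux_sum (List.ofFn c) 0 0
      rw [List.length_ofFn] at hs
      have e1 : (procAux 0 0 (List.ofFn c)).1 = n := by omega
      have e2 : (procAux 0 0 (List.ofFn c)).2 = n := by omega
      show procAux 0 0 (List.ofFn c) = (n, n)
      exact Prod.ext e1 e2
  rw [Finset.filter_congr (fun c _ => hpred c)]
  have hmain := cnt_main (2*n) 0 0 k (le_refl 0) (by omega) (by omega)
  unfold cnt at hmain
  rw [hmain, chooseZ_natCast]
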